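/- For every natural number N there exists δ > 0 such that for all b with 0 < b < δ, the b-orbit h_b has at least N zeros on (0,∞). -/

import Mathlib

open Real Set Filter Topology

/-- A global `C²` solution of equation (14), `h'' - coth(x) h' + sin(2h) = 0` on `(0,∞)`. -/
def SolvesEq14 (h : ℝ → ℝ) : Prop :=
  ContDiffOn ℝ 2 h (Set.Ioi 0) ∧
  ∀ x ∈ Set.Ioi (0:ℝ),
    deriv (deriv h) x - (Real.cosh x / Real.sinh x) * deriv h x + Real.sin (2 * h x) = 0

/-- The `b`-orbit: a global solution of equation (14) with `h(x)/x² → b` as `x → 0⁺`. -/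
def IsBOrbit (b : ℝ) (h : ℝ → ℝ) : Prop :=
  SolvesEq14 h ∧ Filter.Tendsto (fun x => h x / x ^ 2) (𝓝[>] (0:ℝ)) (𝓝 b)

/-! With `g = h' / sinh`, equation (14) is the first-order system `h' = g sinh`,
`g' = -sin (2h) / sinh`, so `|g'| ≤ 2 |h| / x`.

Near `0`, where `h ≈ b x²`, integrating the system from `0` bounds `g` by `6b` at some small `a`.
If `m` is the least constant `≥ 2b` with `|h| ≤ m x²` on `(0, 1]`, integrating from `a` gives
`m ≤ 2b + 3/4 (6b + m)`, so `m ≤ 26b`. Grönwall then bounds `(h, g)` by `O(b)` on any `[1, R]`,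
so `|h| ≤ π/4` there once `b` is small.

Then `sin (2h) / h ≥ 4/π`, which beats the potential `q ≤ 4/π` of `w = √(sinh x) sin (x - α)`
when `α ≥ 7`. If `h` had no zero on `[α, α + π]`, the Wronskian of `h` and `w` would be
nonincreasing there, yet negative at `α` and positive at `α + π`. -/

theorem abs_sub_le_sub_of_abs_deriv_le {f f' G G' : ℝ → ℝ} {a b : ℝ} (hab : a ≤ b)
    (hf : ∀ t ∈ Icc a b, HasDerivAt f (f' t) t) (hG : ∀ t ∈ Icc a b, HasDerivAt G (G' t) t)
    (hbound : ∀ t ∈ Icc a b, |f' t| ≤ G' t) : |f b - f a| ≤ G b - G a := by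
  have mono : ∀ σ : ℝ, |σ| ≤ 1 → MonotoneOn (fun t => G t + σ * f t) (Icc a b) := by
    intro σ hσ
    refine monotoneOn_of_hasDerivWithinAt_nonneg (f' := fun t => G' t + σ * f' t) (convex_Icc a b)
      (fun t ht => ((hG t ht).add ((hf t ht).const_mul σ)).continuousAt.continuousWithinAt)
      (fun t ht => ?_) (fun t ht => ?_) <;> rw [interior_Icc] at ht
    · exact ((hG t (Ioo_subset_Icc_self ht)).add
        ((hf t (Ioo_subset_Icc_self ht)).const_mul σ)).hasDerivWithinAt
    · have h1 := hbound t (Ioo_subset_Icc_self ht)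
      have h2 : |σ * f' t| ≤ |f' t| := by
        rw [abs_mul]; exact mul_le_of_le_one_left (abs_nonneg _) hσ
      linarith [neg_abs_le (σ * f' t)]
  have hmem : a ∈ Icc a b ∧ b ∈ Icc a b := ⟨left_mem_Icc.2 hab, right_mem_Icc.2 hab⟩
  have hplus := mono 1 (by norm_num) hmem.1 hmem.2 hab
  have hminus := mono (-1) (by norm_num) hmem.1 hmem.2 hab
  simp only at hplus hminus
  rw [abs_sub_le_iff]
  constructor <;> linarith

theorem ContinuousOn.pos_of_forall_ne_zero {f : ℝ → ℝ} {a b x : ℝ}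
    (hf : ContinuousOn f (Icc a b)) (hfa : 0 < f a) (hf0 : ∀ y ∈ Icc a b, f y ≠ 0)
    (hx : x ∈ Icc a b) : 0 < f x := by
  by_contra! hfx
  obtain ⟨z, hz, hz0⟩ := isPreconnected_Icc.intermediate_value hx
    (left_mem_Icc.2 (hx.1.trans hx.2)) hf ⟨hfx, hfa.le⟩
  exact hf0 z hz hz0

theorem exists_finset_of_exists_mem_Icc {P : ℝ → Prop} {c d : ℝ} (hd : 0 < d) (N : ℕ)
    (hP : ∀ k : Fin N, ∃ x ∈ Icc (c + 2 * (k : ℕ) * d) (c + 2 * (k : ℕ) * d + d), P x) :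
    ∃ s : Finset ℝ, N ≤ s.card ∧ ∀ x ∈ s, P x := by
  classical
  choose z hz hPz using hP
  have hz_mono : StrictMono z := fun k l hkl => by
    have : ((k : ℕ) : ℝ) + 1 ≤ (l : ℕ) := by exact_mod_cast hkl
    nlinarith [(hz k).2, (hz l).1]
  refine ⟨Finset.univ.image z, ?_, ?_⟩
  · rw [Finset.card_image_of_injective _ hz_mono.injective, Finset.card_univ, Fintype.card_fin]
  · simp only [Finset.mem_image, Finset.mem_univ, true_and, forall_exists_index]
    rintro _ k rfl
    exact hPz k

theorem cosh_sub_one_le {t : ℝ} (ht : |t| ≤ 1) : cosh t - 1 ≤ 3 / 4 * t ^ 2 := by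
  have ht2 : t ^ 2 ≤ 1 := by nlinarith [sq_abs t, abs_nonneg t]
  have hexp := abs_le.1 (Real.abs_exp_sub_one_sub_id_le (x := t ^ 2 / 2)
    (by rw [abs_of_nonneg (by positivity)]; linarith))
  nlinarith [cosh_le_exp_half_sq t, sq_nonneg t]

theorem sq_div_two_le_cosh_sub_one {t : ℝ} (ht : 0 ≤ t) : t ^ 2 / 2 ≤ cosh t - 1 := by
  have key := abs_sub_le_sub_of_abs_deriv_le (f := fun s => s ^ 2 / 2) (f' := id) ht
    (fun s _ => by simpa using (hasDerivAt_pow 2 s).div_const 2) (fun s _ => hasDerivAt_cosh s)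
    (fun s hs => by rw [id, abs_of_nonneg hs.1]; exact self_le_sinh_iff.2 hs.1)
  exact (le_abs_self _).trans (by simpa using key)

/-- The derivative of `h` with respect to `cosh x`. -/
noncomputable def coshDeriv (h : ℝ → ℝ) (x : ℝ) : ℝ := deriv h x / sinh x

theorem deriv_eq_coshDeriv_mul (h : ℝ → ℝ) {x : ℝ} (hx : 0 < x) :
    deriv h x = coshDeriv h x * sinh x := by
  rw [coshDeriv, div_mul_cancel₀ _ (sinh_pos_iff.2 hx).ne']

namespace SolvesEq14

variable {h : ℝ → ℝ}

theorem continuousOn (hS : SolvesEq14 h) : ContinuousOn h (Ioi 0) := hS.1.continuousOn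

theorem hasDerivAt (hS : SolvesEq14 h) {x : ℝ} (hx : 0 < x) : HasDerivAt h (deriv h x) x :=
  ((hS.1.differentiableOn (by norm_num)).differentiableAt (Ioi_mem_nhds hx)).hasDerivAt

theorem hasDerivAt_coshDeriv (hS : SolvesEq14 h) {x : ℝ} (hx : 0 < x) :
    HasDerivAt (coshDeriv h) (-(sin (2 * h x) / sinh x)) x := by
  have hC1 : ContDiffOn ℝ 1 (deriv h) (Ioi 0) := hS.1.deriv_of_isOpen isOpen_Ioi (by norm_num)
  have hderiv : HasDerivAt (deriv h) (deriv (deriv h) x) x :=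
    ((hC1.differentiableOn (by norm_num)).differentiableAt (Ioi_mem_nhds hx)).hasDerivAt
  have hsinh : sinh x ≠ 0 := (sinh_pos_iff.2 hx).ne'
  have heq : deriv (deriv h) x = cosh x / sinh x * deriv h x - sin (2 * h x) := by
    linarith [hS.2 x hx]
  refine (hderiv.div (hasDerivAt_sinh x) hsinh).congr_deriv ?_
  rw [heq]
  field_simp
  ring

theorem neg (hS : SolvesEq14 h) : SolvesEq14 (-h) := by
  refine ⟨hS.1.neg, fun x hx => ?_⟩
  simp only [deriv.neg', deriv.fun_neg', Pi.neg_apply, mul_neg, sin_neg]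
  linear_combination -hS.2 x hx

theorem abs_coshDeriv_sub_le (hS : SolvesEq14 h) {s x C : ℝ} (hs : 0 < s)
    (hC : ∀ t ∈ Icc s x, |h t| ≤ C * t ^ 2) {t p : ℝ} (ht : t ∈ Icc s x) (hp : p ∈ Icc s x) :
    |coshDeriv h t - coshDeriv h p| ≤ C * x ^ 2 := by
  wlog hpt : p ≤ t generalizing t p
  · rw [abs_sub_comm]; exact this hp ht (le_of_not_ge hpt)
  have hpos : ∀ r ∈ Icc p t, 0 < r := fun r hr => hs.trans_le (hp.1.trans hr.1)
  have hC0 : 0 ≤ C := by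
    have := (abs_nonneg _).trans (hC t ht)
    exact nonneg_of_mul_nonneg_left this (pow_pos (hs.trans_le ht.1) 2)
  have key := abs_sub_le_sub_of_abs_deriv_le (G := fun r => C * r ^ 2) (G' := fun r => 2 * C * r)
    hpt (fun r hr => hS.hasDerivAt_coshDeriv (hpos r hr))
    (fun r _ => by simpa [mul_comm, mul_left_comm] using (hasDerivAt_pow 2 r).const_mul C)
    (fun r hr => by
      have hr0 := hpos r hr
      have hsinh := sinh_pos_iff.2 hr0
      have hsin : |sin (2 * h r)| ≤ 2 * |h r| := by
        simpa [abs_mul] using abs_sin_le_abs (x := 2 * h r)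
      have hbound := hC r ⟨hp.1.trans hr.1, hr.2.trans ht.2⟩
      rw [abs_neg, abs_div, abs_of_pos hsinh, div_le_iff₀ hsinh]
      nlinarith [self_le_sinh_iff.2 hr0.le, mul_nonneg hC0 hr0.le])
  have htx : C * t ^ 2 ≤ C * x ^ 2 :=
    mul_le_mul_of_nonneg_left (pow_le_pow_left₀ (hs.trans_le ht.1).le ht.2 2) hC0
  linarith [mul_nonneg hC0 (sq_nonneg p)]

theorem abs_sub_sub_coshDeriv_mul_le (hS : SolvesEq14 h) {s x p C : ℝ} (hs : 0 < s) (hsx : s ≤ x)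
    (hC : ∀ t ∈ Icc s x, |h t| ≤ C * t ^ 2) (hp : p ∈ Icc s x) :
    |h x - h s - coshDeriv h p * (cosh x - cosh s)| ≤ C * x ^ 2 * (cosh x - cosh s) := by
  have key := abs_sub_le_sub_of_abs_deriv_le (f := fun t => h t - coshDeriv h p * cosh t)
    (f' := fun t => (coshDeriv h t - coshDeriv h p) * sinh t)
    (G := fun t => C * x ^ 2 * cosh t) (G' := fun t => C * x ^ 2 * sinh t) hsx
    (fun t ht => by
      have ht0 := hs.trans_le ht.1
      refine ((hS.hasDerivAt ht0).sub ((hasDerivAt_cosh t).const_mul _)).congr_deriv ?_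
      rw [deriv_eq_coshDeriv_mul h ht0]; ring)
    (fun t _ => (hasDerivAt_cosh t).const_mul _)
    (fun t ht => by
      rw [abs_mul, abs_of_pos (sinh_pos_iff.2 (hs.trans_le ht.1))]
      exact mul_le_mul_of_nonneg_right (hS.abs_coshDeriv_sub_le hs hC ht hp)
        (sinh_pos_iff.2 (hs.trans_le ht.1)).le)
  rw [show h x - h s - coshDeriv h p * (cosh x - cosh s)
      = (h x - coshDeriv h p * cosh x) - (h s - coshDeriv h p * cosh s) by ring, mul_sub]
  exact key

theorem abs_sub_coshDeriv_mul_le (hS : SolvesEq14 h) (h0 : Tendsto h (𝓝[>] 0) (𝓝 0)) {x C : ℝ}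
    (hx : 0 < x) (hC : ∀ t ∈ Ioc 0 x, |h t| ≤ C * t ^ 2) :
    |h x - coshDeriv h x * (cosh x - 1)| ≤ C * x ^ 2 * (cosh x - 1) := by
  have hcosh : Tendsto cosh (𝓝[>] 0) (𝓝 1) := by
    simpa using (continuous_cosh.tendsto 0).mono_left nhdsWithin_le_nhds
  refine le_of_tendsto_of_tendsto
    (f := fun τ => |h x - h τ - coshDeriv h x * (cosh x - cosh τ)|)
    (g := fun τ => C * x ^ 2 * (cosh x - cosh τ)) ?_ ((tendsto_const_nhds.sub hcosh).const_mul _) ?_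
  · simpa using ((tendsto_const_nhds.sub h0).sub ((tendsto_const_nhds.sub hcosh).const_mul _)).abs
  · filter_upwards [Ioo_mem_nhdsGT hx] with τ hτ
    exact hS.abs_sub_sub_coshDeriv_mul_le hτ.1 hτ.2.le
      (fun t ht => hC t ⟨hτ.1.trans_le ht.1, ht.2⟩) (right_mem_Icc.2 hτ.2.le)

theorem abs_le_mul_sq_of_abs_coshDeriv_le (hS : SolvesEq14 h) {a t A B m : ℝ} (ha : a ∈ Ioc 0 1)
    (hha : |h a| ≤ A * a ^ 2) (hga : |coshDeriv h a| ≤ B) (hm : ∀ t ∈ Icc a 1, |h t| ≤ m * t ^ 2)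
    (ht : t ∈ Icc a 1) : |h t| ≤ (A + 3 / 4 * (B + m)) * t ^ 2 := by
  have ha0 := ha.1
  have ht0 : 0 < t := ha0.trans_le ht.1
  have hA : 0 ≤ A := nonneg_of_mul_nonneg_left ((abs_nonneg _).trans hha) (by positivity)
  have hm0 : 0 ≤ m := by simpa using (abs_nonneg _).trans (hm 1 ⟨ha.2, le_rfl⟩)
  have hstep := hS.abs_sub_sub_coshDeriv_mul_le ha0 ht.1 (C := m)
    (fun r hr => hm r ⟨hr.1, hr.2.trans ht.2⟩) (left_mem_Icc.2 ht.1)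
  have hcosh_mono : cosh a ≤ cosh t := by
    rw [cosh_le_cosh, abs_of_pos ha0, abs_of_pos ht0]; exact ht.1
  have hcosh : cosh t - cosh a ≤ 3 / 4 * t ^ 2 := by
    have := cosh_sub_one_le (t := t) (by rw [abs_of_pos ht0]; exact ht.2)
    linarith [one_le_cosh a]
  have ht2 : t ^ 2 ≤ 1 := pow_le_one₀ ht0.le ht.2
  have hgrowth : |h t - h a| ≤ (B + m) * (cosh t - cosh a) := by
    have hg := mul_le_mul_of_nonneg_right hga (sub_nonneg.2 hcosh_mono)
    have hmt := mul_le_mul_of_nonneg_right (mul_le_of_le_one_right hm0 ht2)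
      (sub_nonneg.2 hcosh_mono)
    have := abs_sub_abs_le_abs_sub (h t - h a) (coshDeriv h a * (cosh t - cosh a))
    rw [abs_mul, abs_of_nonneg (sub_nonneg.2 hcosh_mono)] at this
    nlinarith
  have haa : A * a ^ 2 ≤ A * t ^ 2 :=
    mul_le_mul_of_nonneg_left (pow_le_pow_left₀ ha0.le ht.1 2) hA
  have hBm : 0 ≤ B + m := by linarith [(abs_nonneg _).trans hga]
  calc |h t| ≤ |h a| + |h t - h a| := by simpa using abs_add_le (h a) (h t - h a)
    _ ≤ A * t ^ 2 + (B + m) * (3 / 4 * t ^ 2) := by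
        gcongr ?_ + ?_
        · exact hha.trans haa
        · exact hgrowth.trans (mul_le_mul_of_nonneg_left hcosh hBm)
    _ = (A + 3 / 4 * (B + m)) * t ^ 2 := by ring

theorem abs_le_of_mem_Icc (hS : SolvesEq14 h) {δ R x : ℝ} (h1 : |h 1| ≤ δ)
    (hg1 : |coshDeriv h 1| ≤ δ) (hx : x ∈ Icc 1 R) :
    |h x| ≤ δ * exp ((sinh R + 2) * (x - 1)) := by
  have hpos : ∀ t ∈ Icc 1 R, 0 < t := fun t ht => one_pos.trans_le ht.1
  have hder : ∀ t ∈ Icc 1 R, HasDerivAt (fun t => (h t, coshDeriv h t))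
      (coshDeriv h t * sinh t, -(sin (2 * h t) / sinh t)) t := fun t ht =>
    (deriv_eq_coshDeriv_mul h (hpos t ht) ▸ hS.hasDerivAt (hpos t ht)).prodMk
      (hS.hasDerivAt_coshDeriv (hpos t ht))
  have hbound : ∀ t ∈ Ico 1 R, ‖((coshDeriv h t * sinh t, -(sin (2 * h t) / sinh t)) : ℝ × ℝ)‖
      ≤ (sinh R + 2) * ‖((h t, coshDeriv h t) : ℝ × ℝ)‖ + 0 := by
    intro t ht
    have ht0 := hpos t (Ico_subset_Icc_self ht)
    have hsinh : 0 < sinh t := sinh_pos_iff.2 ht0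
    have hsinhR : sinh t ≤ sinh R := sinh_le_sinh.2 ht.2.le
    have hsin : |sin (2 * h t)| ≤ 2 * |h t| := by
      simpa [abs_mul] using abs_sin_le_abs (x := 2 * h t)
    have hge : 1 ≤ sinh t := ht.1.trans (self_le_sinh_iff.2 ht0.le)
    simp only [Prod.norm_def, Real.norm_eq_abs, add_zero]
    have hh := le_max_left |h t| |coshDeriv h t|
    have hg := le_max_right |h t| |coshDeriv h t|
    refine max_le ?_ ?_
    · rw [abs_mul, abs_of_pos hsinh]
      nlinarith [abs_nonneg (coshDeriv h t), abs_nonneg (h t)]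
    · have hM : 0 ≤ max |h t| |coshDeriv h t| := (abs_nonneg _).trans hh
      rw [abs_neg, abs_div, abs_of_pos hsinh, div_le_iff₀ hsinh]
      nlinarith [mul_nonneg (mul_nonneg (hsinh.le.trans hsinhR) hM) hsinh.le]
  have hgr := norm_le_gronwallBound_of_norm_deriv_right_le
    (fun t ht => (hder t ht).continuousAt.continuousWithinAt)
    (fun t ht => (hder t (Ico_subset_Icc_self ht)).hasDerivWithinAt)
    (by simpa [Prod.norm_def] using And.intro h1 hg1) hbound x hx
  rw [gronwallBound_ε0] at hgr
  exact (norm_fst_le _).trans hgr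

end SolvesEq14

namespace IsBOrbit

variable {b : ℝ} {h : ℝ → ℝ}

theorem tendsto_zero (hO : IsBOrbit b h) : Tendsto h (𝓝[>] 0) (𝓝 0) := by
  have hsq : Tendsto (fun t : ℝ => t ^ 2) (𝓝[>] 0) (𝓝 0) := by
    simpa using ((continuous_pow 2).tendsto (0 : ℝ)).mono_left nhdsWithin_le_nhds
  refine (by simpa using hO.2.mul hsq : Tendsto (fun t => h t / t ^ 2 * t ^ 2) _ _).congr' ?_
  filter_upwards [self_mem_nhdsWithin] with t ht
  exact div_mul_cancel₀ _ (pow_ne_zero 2 (ne_of_gt ht))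

theorem exists_abs_coshDeriv_le (hb : 0 < b) (hO : IsBOrbit b h) :
    ∃ a ∈ Ioc (0 : ℝ) 1, (∀ t ∈ Ioc 0 a, |h t| ≤ 2 * b * t ^ 2) ∧ |coshDeriv h a| ≤ 6 * b := by
  have hev : ∀ᶠ t in 𝓝[>] 0, |h t| ≤ 2 * b * t ^ 2 := by
    filter_upwards [hO.2 (Ioo_mem_nhds (by linarith : -(2 * b) < b) (by linarith : b < 2 * b)),
      self_mem_nhdsWithin] with t ht ht0
    have ht2 : 0 < t ^ 2 := pow_pos ht0 2
    rw [mem_preimage, mem_Ioo, lt_div_iff₀ ht2, div_lt_iff₀ ht2] at ht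
    exact abs_le.2 ⟨by linarith, by linarith⟩
  obtain ⟨u, hu, hsub⟩ := mem_nhdsGT_iff_exists_Ioc_subset.1 hev
  set a := min u 1
  have ha : a ∈ Ioc (0 : ℝ) 1 := ⟨lt_min hu one_pos, min_le_right _ _⟩
  have hnear : ∀ t ∈ Ioc 0 a, |h t| ≤ 2 * b * t ^ 2 :=
    fun t ht => hsub ⟨ht.1, ht.2.trans (min_le_left _ _)⟩
  refine ⟨a, ha, hnear, ?_⟩
  have key := hO.1.abs_sub_coshDeriv_mul_le hO.tendsto_zero ha.1 hnear
  have hc := sq_div_two_le_cosh_sub_one ha.1.le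
  have hc0 : 0 < cosh a - 1 := lt_of_lt_of_le (by have := ha.1; positivity) hc
  have ha2 : a ^ 2 ≤ 1 := pow_le_one₀ ha.1.le ha.2
  have hha := hnear a ⟨ha.1, le_rfl⟩
  have htri := abs_sub_abs_le_abs_sub (coshDeriv h a * (cosh a - 1)) (h a)
  rw [abs_mul, abs_of_pos hc0, abs_sub_comm] at htri
  refine le_of_mul_le_mul_right ?_ hc0
  nlinarith [mul_le_mul_of_nonneg_left ha2 (mul_nonneg hb.le hc0.le)]

theorem abs_le_mul_sq (hb : 0 < b) (hO : IsBOrbit b h) :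
    ∀ t ∈ Ioc (0 : ℝ) 1, |h t| ≤ 26 * b * t ^ 2 := by
  obtain ⟨a, ha, hnear, hga⟩ := hO.exists_abs_coshDeriv_le hb
  have hcont : ContinuousOn (fun t => |h t| / t ^ 2) (Icc a 1) :=
    (hO.1.continuousOn.mono fun t ht => ha.1.trans_le ht.1).abs.div (continuousOn_pow 2)
      fun t ht => pow_ne_zero 2 (ha.1.trans_le ht.1).ne'
  obtain ⟨t₀, ht₀, hmax⟩ := isCompact_Icc.exists_isMaxOn (nonempty_Icc.2 ha.2) hcont
  set m := max (2 * b) (|h t₀| / t₀ ^ 2)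
  have hm : ∀ t ∈ Ioc (0 : ℝ) 1, |h t| ≤ m * t ^ 2 := by
    intro t ht
    rcases le_total t a with hta | hat
    · exact (hnear t ⟨ht.1, hta⟩).trans (by gcongr; exact le_max_left _ _)
    · have := (div_le_iff₀ (pow_pos ht.1 2)).1 (hmax ⟨hat, ht.2⟩)
      exact this.trans (by gcongr; exact le_max_right _ _)
  have ht₀0 : 0 < t₀ := ha.1.trans_le ht₀.1
  have hcontr := hO.1.abs_le_mul_sq_of_abs_coshDeriv_le ha (hnear a ⟨ha.1, le_rfl⟩) hga
    (fun t ht => hm t ⟨ha.1.trans_le ht.1, ht.2⟩) ht₀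
  have hM : |h t₀| / t₀ ^ 2 ≤ 2 * b + 3 / 4 * (6 * b + m) :=
    (div_le_iff₀ (pow_pos ht₀0 2)).2 hcontr
  have hm26 : m ≤ 26 * b := by
    rcases max_cases (2 * b) (|h t₀| / t₀ ^ 2) with ⟨hm, -⟩ | ⟨hm, -⟩ <;> linarith
  exact fun t ht => (hm t ht).trans (by gcongr)

theorem abs_le_and_abs_coshDeriv_le (hb : 0 < b) (hO : IsBOrbit b h) :
    |h 1| ≤ 32 * b ∧ |coshDeriv h 1| ≤ 32 * b := by
  have hbound := hO.abs_le_mul_sq hb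
  obtain ⟨a, ha, -, hga⟩ := hO.exists_abs_coshDeriv_le hb
  have hvar := hO.1.abs_coshDeriv_sub_le ha.1 (fun t ht => hbound t ⟨ha.1.trans_le ht.1, ht.2⟩)
    (right_mem_Icc.2 ha.2) (left_mem_Icc.2 ha.2)
  have h1 := hbound 1 ⟨one_pos, le_rfl⟩
  constructor
  · linarith
  · linarith [abs_sub_abs_le_abs_sub (coshDeriv h 1) (coshDeriv h a)]

end IsBOrbit

/-- The Wronskian `(h' w - w' h) / sinh` of `h` and `w x = √(sinh x) sin (x - α)`, which solves
`(w' / sinh)' + q w / sinh = 0` with `q = (2 sinh² + 3 cosh²) / (4 sinh²)`. -/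
noncomputable def sturmWronskian (h : ℝ → ℝ) (α x : ℝ) : ℝ :=
  coshDeriv h x * (√(sinh x) * sin (x - α))
    - (cosh x * sin (x - α) / (2 * sinh x) + cos (x - α)) / √(sinh x) * h x

namespace SolvesEq14

variable {h : ℝ → ℝ}

theorem hasDerivAt_sturmWronskian (hS : SolvesEq14 h) (α : ℝ) {x : ℝ} (hx : 0 < x) :
    HasDerivAt (sturmWronskian h α) (sin (x - α) / √(sinh x) *
      ((2 * sinh x ^ 2 + 3 * cosh x ^ 2) / (4 * sinh x ^ 2) * h x - sin (2 * h x))) x := by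
  have hsinh : 0 < sinh x := sinh_pos_iff.2 hx
  have hroot : 0 < √(sinh x) := sqrt_pos.2 hsinh
  have hr := (hasDerivAt_sinh x).sqrt hsinh.ne'
  have hsin : HasDerivAt (fun y => sin (y - α)) (cos (x - α)) x := by
    simpa using ((hasDerivAt_id x).sub_const α).sin
  have hcos : HasDerivAt (fun y => cos (y - α)) (-sin (x - α)) x := by
    simpa using ((hasDerivAt_id x).sub_const α).cos
  have hw' := ((((hasDerivAt_cosh x).mul hsin).div ((hasDerivAt_sinh x).const_mul 2)
    (by positivity)).add hcos).div hr hroot.ne'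
  refine (((hS.hasDerivAt_coshDeriv hx).mul (hr.mul hsin)).sub
    (hw'.mul (hS.hasDerivAt hx))).congr_deriv ?_
  simp only [Pi.mul_apply, Pi.div_apply, Pi.add_apply]
  rw [deriv_eq_coshDeriv_mul h hx]
  have hsq : √(sinh x) ^ 2 = sinh x := sq_sqrt hsinh.le
  set r := √(sinh x)
  rw [← hsq]
  field_simp
  ring

theorem not_forall_pos_le (hS : SolvesEq14 h) {α : ℝ} (hα : 7 ≤ α) :
    ¬ ∀ x ∈ Icc α (α + π), 0 < h x ∧ h x ≤ π / 4 := by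
  intro hpos
  have hαπ : α ≤ α + π := by linarith [pi_pos]
  have hI : ∀ x ∈ Icc α (α + π), 0 < x := fun x hx => by linarith [hx.1]
  have hderiv_nonpos : ∀ x ∈ Icc α (α + π), sin (x - α) / √(sinh x) *
      ((2 * sinh x ^ 2 + 3 * cosh x ^ 2) / (4 * sinh x ^ 2) * h x - sin (2 * h x)) ≤ 0 := by
    intro x hx
    obtain ⟨hh0, hhπ⟩ := hpos x hx
    have hsinh : 7 ≤ sinh x := hα.trans (hx.1.trans (self_le_sinh_iff.2 (hI x hx).le))
    have hq : (2 * sinh x ^ 2 + 3 * cosh x ^ 2) / (4 * sinh x ^ 2) ≤ 4 / π := by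
      rw [div_le_div_iff₀ (by positivity) pi_pos, cosh_sq]
      nlinarith [pi_lt_d2, pi_pos]
    have hjordan : 4 / π * h x ≤ sin (2 * h x) := by
      have := mul_le_sin (by linarith : 0 ≤ 2 * h x) (by linarith)
      linarith [show 2 / π * (2 * h x) = 4 / π * h x by ring]
    refine mul_nonpos_of_nonneg_of_nonpos
      (div_nonneg (sin_nonneg_of_nonneg_of_le_pi ?_ ?_) (sqrt_nonneg _)) ?_
    · linarith [hx.1]
    · linarith [hx.2]
    · nlinarith [mul_le_mul_of_nonneg_right hq hh0.le]
  have hanti : AntitoneOn (sturmWronskian h α) (Icc α (α + π)) := by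
    refine antitoneOn_of_deriv_nonpos (convex_Icc _ _)
      (fun x hx => (hS.hasDerivAt_sturmWronskian α (hI x hx)).continuousAt.continuousWithinAt)
      (fun x hx => ?_) (fun x hx => ?_) <;> rw [interior_Icc] at hx
    · exact (hS.hasDerivAt_sturmWronskian α (hI x (Ioo_subset_Icc_self hx))).differentiableAt
        |>.differentiableWithinAt
    · rw [(hS.hasDerivAt_sturmWronskian α (hI x (Ioo_subset_Icc_self hx))).deriv]
      exact hderiv_nonpos x (Ioo_subset_Icc_self hx)
  have hleft : sturmWronskian h α α < 0 := by
    have := (hpos α (left_mem_Icc.2 hαπ)).1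
    have : 0 < √(sinh α) := sqrt_pos.2 (sinh_pos_iff.2 (hI α (left_mem_Icc.2 hαπ)))
    simp only [sturmWronskian, sub_self, sin_zero, cos_zero, mul_zero, zero_div, zero_add]
    have : 0 < 1 / √(sinh α) * h α := by positivity
    linarith
  have hright : 0 < sturmWronskian h α (α + π) := by
    have := (hpos (α + π) (right_mem_Icc.2 hαπ)).1
    have : 0 < √(sinh (α + π)) := sqrt_pos.2 (sinh_pos_iff.2 (hI _ (right_mem_Icc.2 hαπ)))
    simp only [sturmWronskian, add_sub_cancel_left, sin_pi, cos_pi, mul_zero, zero_div, zero_add,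
      neg_div, neg_mul, sub_neg_eq_add]
    positivity
  linarith [hanti (left_mem_Icc.2 hαπ) (right_mem_Icc.2 hαπ) hαπ]

theorem exists_zero_of_abs_le (hS : SolvesEq14 h) {α : ℝ} (hα : 7 ≤ α)
    (hsmall : ∀ x ∈ Icc α (α + π), |h x| ≤ π / 4) : ∃ x ∈ Icc α (α + π), h x = 0 := by
  by_contra! hne
  have hα_mem : α ∈ Icc α (α + π) := left_mem_Icc.2 (by linarith [pi_pos])
  have hcont : ContinuousOn h (Icc α (α + π)) :=
    hS.continuousOn.mono fun x hx => show 0 < x by linarith [hx.1]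
  rcases (hne α hα_mem).lt_or_gt with hneg | hpos
  · refine hS.neg.not_forall_pos_le hα fun x hx => ⟨?_, (neg_le_abs (h x)).trans (hsmall x hx)⟩
    exact hcont.neg.pos_of_forall_ne_zero (by simpa using hneg)
      (fun y hy => by simpa using hne y hy) hx
  · exact hS.not_forall_pos_le hα fun x hx =>
      ⟨hcont.pos_of_forall_ne_zero hpos hne hx, (le_abs_self _).trans (hsmall x hx)⟩

end SolvesEq14

/-- **Lemma 3.** If `b > 0` is sufficiently small then the `b`-orbit has arbitrarily
many zeros: for every `N` there is `δ > 0` such that for all `0 < b < δ` the `b`-orbit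
has at least `N` zeros on `(0,∞)`. -/
theorem small_b_orbits_have_many_zeros (N : ℕ) :
    ∃ δ > (0:ℝ), ∀ b : ℝ, 0 < b → b < δ → ∀ h : ℝ → ℝ, IsBOrbit b h →
      ∃ s : Finset ℝ, N ≤ s.card ∧ ∀ x ∈ s, 0 < x ∧ h x = 0 := by
  set R : ℝ := 7 + 2 * N * π
  refine ⟨π / 4 / (32 * exp ((sinh R + 2) * (R - 1))), by positivity, fun b hb hbδ h hO => ?_⟩
  have hR : 0 ≤ sinh R + 2 := by linarith [sinh_nonneg_iff.2 (by positivity : 0 ≤ R)]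
  obtain ⟨h1, hg1⟩ := hO.abs_le_and_abs_coshDeriv_le hb
  have hsmall : ∀ x ∈ Icc 1 R, |h x| ≤ π / 4 := fun x hx => calc
    |h x| ≤ 32 * b * exp ((sinh R + 2) * (x - 1)) := hO.1.abs_le_of_mem_Icc h1 hg1 hx
    _ ≤ 32 * b * exp ((sinh R + 2) * (R - 1)) := by gcongr; exact hx.2
    _ ≤ π / 4 := by linarith [(lt_div_iff₀ (by positivity)).1 hbδ]
  refine exists_finset_of_exists_mem_Icc (c := 7) pi_pos N fun k => ?_
  have hk : ((k : ℕ) : ℝ) + 1 ≤ N := by exact_mod_cast k.isLt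
  obtain ⟨x, hx, hx0⟩ := hO.1.exists_zero_of_abs_le (α := 7 + 2 * (k : ℕ) * π)
    (by nlinarith [pi_pos])
    fun y hy => hsmall y ⟨by nlinarith [hy.1, pi_pos], by nlinarith [hy.2, pi_pos]⟩
  exact ⟨x, hx, by nlinarith [hx.1, pi_pos], hx0⟩
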